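/- arXiv:1510.00747 — 5 statements merged into one kernel-verified Lean document; each statement's English description precedes it below -/
import Mathlib

section
/- Let A be an invertible n×n lower triangular matrix with diagonal D = Diag(a_{1,1},…,a_{n,n}), and let B = I + (I − A) D⁻¹. Then the matrices E_k⁻¹ (inverses of the elementary factors of A) are precisely the elementary factors by columns of B, i.e., E_k⁻¹ coincides with B in its k-th column and with the identity elsewhere. -/
/-!
Writing `a` for the `k`-th column of `A`, the factor `E_k = 1 + (a - e_k) e_kᵀ` is a rank-one
perturbation of the identity, and the product of two such factors with the same `k` is again
one, whose `k`-th column is `E_k` applied to the `k`-th column of the second. Hence `E_k⁻¹` is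
the factor with `k`-th column `e_k + (e_k - a) / a_kk`. For an invertible lower triangular `A`
every `a_ii` is nonzero, so `D⁻¹` is the genuine inverse and that column is the `k`-th column of
`B = 1 + (1 - A) D⁻¹`.
-/

/-- The elementary factor `E_k` of `A`. -/
def elemFactor {n : ℕ} (A : Matrix (Fin n) (Fin n) ℂ) (k : Fin n) :
    Matrix (Fin n) (Fin n) ℂ :=
  Matrix.of fun i j => if j = k then A i j else if i = j then 1 else 0

theorem Matrix.IsLowerTriangular.isUnit_apply_self {R m : Type*} [CommRing R] [Fintype m]
    [DecidableEq m] [LinearOrder m] {M : Matrix m m R} (hM : M.IsLowerTriangular)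
    (hU : IsUnit M) (i : m) : IsUnit (M i i) := by
  rw [isUnit_iff_isUnit_det, det_of_isLowerTriangular M hM, IsUnit.prod_univ_iff] at hU
  exact hU i

theorem Matrix.inv_diagonal_of_ne_zero {K m : Type*} [Field K] [Fintype m] [DecidableEq m]
    {d : m → K} (hd : ∀ i, d i ≠ 0) : (diagonal d)⁻¹ = diagonal fun i => (d i)⁻¹ :=
  inv_eq_left_inv <| by simp [diagonal_mul_diagonal, inv_mul_cancel₀ (hd _)]

section elemFactor

variable {n : ℕ} {A C : Matrix (Fin n) (Fin n) ℂ} {k : Fin n}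

theorem elemFactor_congr_col (h : ∀ i, A i k = C i k) : elemFactor A k = elemFactor C k := by
  ext i j
  by_cases hj : j = k
  · subst hj
    simp [elemFactor, h]
  · simp [elemFactor, hj]

@[simp]
theorem elemFactor_apply_self_right (A : Matrix (Fin n) (Fin n) ℂ) (k i : Fin n) :
    elemFactor A k i k = A i k := by
  simp [elemFactor]

theorem elemFactor_one : elemFactor 1 k = 1 := by
  ext i j
  by_cases hj : j = k <;> simp [elemFactor, Matrix.one_apply, hj]

theorem elemFactor_mul_apply (A C : Matrix (Fin n) (Fin n) ℂ) (k i j : Fin n) :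
    (elemFactor A k * C) i j = C i j + (A i k - (1 : Matrix (Fin n) (Fin n) ℂ) i k) * C k j := by
  have hE : ∀ l, elemFactor A k i l = (1 : Matrix (Fin n) (Fin n) ℂ) i l +
      if l = k then A i k - (1 : Matrix (Fin n) (Fin n) ℂ) i k else 0 := by
    intro l
    by_cases hl : l = k
    · subst hl; simp [elemFactor]
    · simp [elemFactor, hl, Matrix.one_apply]
  simp only [Matrix.mul_apply, hE, add_mul, Finset.sum_add_distrib, ite_mul, zero_mul,
    Finset.sum_ite_eq', Finset.mem_univ, if_true]
  rw [← Matrix.mul_apply, Matrix.one_mul]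

theorem elemFactor_mul_elemFactor (A C : Matrix (Fin n) (Fin n) ℂ) (k : Fin n) :
    elemFactor A k * elemFactor C k = elemFactor (elemFactor A k * C) k := by
  ext i j
  rw [elemFactor_mul_apply]
  by_cases hj : j = k
  · subst hj
    simp [elemFactor_mul_apply]
  · simp [elemFactor, hj, Ne.symm hj]

theorem inv_elemFactor (hk : A k k ≠ 0) :
    (elemFactor A k)⁻¹ = elemFactor (1 + (A k k)⁻¹ • (1 - A)) k := by
  refine Matrix.inv_eq_right_inv <| (elemFactor_mul_elemFactor _ _ k).trans <|
    (elemFactor_congr_col fun i => ?_).trans elemFactor_one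
  have hcol : ∀ i, (1 + (A k k)⁻¹ • (1 - A)) i k =
      (1 : Matrix (Fin n) (Fin n) ℂ) i k +
        (A k k)⁻¹ * ((1 : Matrix (Fin n) (Fin n) ℂ) i k - A i k) :=
    fun i => by simp
  rw [elemFactor_mul_apply, hcol, hcol, Matrix.one_apply_eq]
  field_simp
  ring

end elemFactor

theorem stmt3 {n : ℕ} (A : Matrix (Fin n) (Fin n) ℂ)
    (hlow : ∀ i j : Fin n, i < j → A i j = 0) (hA : IsUnit A) (k : Fin n) :
    (elemFactor A k)⁻¹ =
      elemFactor (1 + (1 - A) * (Matrix.diagonal fun i => A i i)⁻¹) k := by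
  have hdiag : ∀ i, A i i ≠ 0 := fun i =>
    (Matrix.IsLowerTriangular.isUnit_apply_self (fun i j h => hlow i j h) hA i).ne_zero
  rw [inv_elemFactor (hdiag k), Matrix.inv_diagonal_of_ne_zero hdiag]
  refine elemFactor_congr_col fun i => ?_
  simp [Matrix.mul_diagonal, mul_comm]
end

section
/- Let A be an invertible n×n lower triangular matrix with elementary factors E_1,…,E_n, and let B = I + (I − A) D⁻¹ where D is the diagonal of A. Then B⁻¹ = E_n E_{n−1} ⋯ E_2 E_1. -/
theorem stmt4 {n : ℕ} (A : Matrix (Fin n) (Fin n) ℂ)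
    (hlow : ∀ i j : Fin n, i < j → A i j = 0) (hA : IsUnit A) :
    (1 + (1 - A) * (Matrix.diagonal fun i => A i i)⁻¹)⁻¹ =
      (List.ofFn fun k => elemFactor A k).reverse.prod := by
  classical
  set B : Matrix (Fin n) (Fin n) ℂ :=
    1 + (1 - A) * (Matrix.diagonal fun i => A i i)⁻¹ with hBdef
  have hdet : A.det = ∏ i, A i i :=
    Matrix.det_of_lowerTriangular A (fun i j h => hlow i j h)
  have hdu : IsUnit A.det := (Matrix.isUnit_iff_isUnit_det A).mp hA
  have hd : ∀ i, A i i ≠ 0 := by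
    intro i h
    apply hdu.ne_zero
    rw [hdet]
    exact Finset.prod_eq_zero (Finset.mem_univ i) h
  have hdiaginv : (Matrix.diagonal fun i => A i i)⁻¹ =
      Matrix.diagonal fun i => (A i i)⁻¹ := by
    apply Matrix.inv_eq_right_inv
    rw [Matrix.diagonal_mul_diagonal]
    have h1 : (fun i => A i i * (A i i)⁻¹) = fun _ : Fin n => (1 : ℂ) :=
      funext fun i => mul_inv_cancel₀ (hd i)
    rw [h1, Matrix.diagonal_one]
  have hB : ∀ i j, B i j =
      (if i = j then (1 : ℂ) else 0) +
        ((if i = j then (1 : ℂ) else 0) - A i j) * (A j j)⁻¹ := by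
    intro i j
    rw [hBdef, hdiaginv]
    simp [Matrix.add_apply, Matrix.mul_diagonal, Matrix.sub_apply, Matrix.one_apply]
  -- multiplying on the right by `elemFactor A k` only changes column `k`
  have hmul : ∀ (M : Matrix (Fin n) (Fin n) ℂ) (k i j : Fin n),
      (M * elemFactor A k) i j = if j = k then ∑ l, M i l * A l k else M i j := by
    intro M k i j
    rw [Matrix.mul_apply]
    by_cases h : j = k
    · subst h; simp [elemFactor]
    · simp [elemFactor, h]
  -- the key column computation
  have key : ∀ i k : Fin n,
      (∑ l, (if l ≤ k then B i l else if i = l then (1 : ℂ) else 0) * A l k) =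
        if i = k then 1 else 0 := by
    intro i k
    have hsum : ∀ l : Fin n,
        (if l ≤ k then B i l else if i = l then (1 : ℂ) else 0) * A l k =
          (if l = k then B i k * A k k else 0) +
            (if i = l then (if k < l then A l k else 0) else 0) := by
      intro l
      rcases lt_trichotomy l k with h | h | h
      · rw [if_pos h.le, hlow l k h, if_neg h.ne, if_neg (not_lt.2 h.le)]
        simp
      · subst h
        simp
      · rw [if_neg (not_le.2 h), if_neg h.ne', if_pos h]
        by_cases hi : i = l <;> simp [hi]
    rw [Finset.sum_congr rfl fun l _ => hsum l, Finset.sum_add_distrib,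
      Finset.sum_ite_eq' Finset.univ k fun _ => B i k * A k k,
      Finset.sum_ite_eq Finset.univ i fun l => if k < l then A l k else 0]
    simp only [Finset.mem_univ, if_pos]
    have hBik : B i k * A k k =
        (if i = k then (1 : ℂ) else 0) * A k k + ((if i = k then 1 else 0) - A i k) := by
      rw [hB i k, add_mul, mul_assoc, inv_mul_cancel₀ (hd k), mul_one]
    rw [hBik]
    rcases lt_trichotomy i k with h | h | h
    · rw [hlow i k h, if_neg h.ne, if_neg (not_lt.2 h.le)]
      simp
    · subst h
      simp
    · rw [if_neg h.ne', if_pos h]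
      ring
  -- main induction: peeling the factors from the left
  have main : ∀ m, m ≤ n →
      B * (((List.ofFn fun k => elemFactor A k).drop (n - m)).reverse.prod) =
        Matrix.of fun i j : Fin n =>
          if (j : ℕ) < n - m then B i j else if i = j then (1 : ℂ) else 0 := by
    intro m
    induction m with
    | zero =>
      intro _
      have : (List.ofFn fun k => elemFactor A k).drop (n - 0) = [] := by
        apply List.drop_eq_nil_of_le
        simp
      rw [this]
      simp only [List.reverse_nil, List.prod_nil, mul_one]
      ext i j
      have : (j : ℕ) < n - 0 := by simp
      simp [this]
    | succ m ih =>
      intro hm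
      have hm' : m ≤ n := Nat.le_of_succ_le hm
      have ht : n - (m + 1) < n := by omega
      have hlen : n - (m + 1) < (List.ofFn fun k => elemFactor A k).length := by
        simp only [List.length_ofFn]; exact ht
      have hdrop : (List.ofFn fun k => elemFactor A k).drop (n - (m + 1)) =
          elemFactor A ⟨n - (m + 1), ht⟩ ::
            (List.ofFn fun k => elemFactor A k).drop (n - (m + 1) + 1) := by
        rw [List.drop_eq_getElem_cons hlen]
        congr 1
        simp
      have hstep : n - (m + 1) + 1 = n - m := by omega
      rw [hdrop, hstep, List.reverse_cons, List.prod_append, List.prod_cons,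
        List.prod_nil, mul_one, ← Matrix.mul_assoc, ih hm']
      ext i j
      rw [hmul]
      by_cases hj : j = ⟨n - (m + 1), ht⟩
      · subst hj
        have hcol : ∀ l : Fin n,
            (Matrix.of fun i j : Fin n =>
              if (j : ℕ) < n - m then B i j else if i = j then (1 : ℂ) else 0) i l =
            if l ≤ (⟨n - (m + 1), ht⟩ : Fin n) then B i l else if i = l then 1 else 0 := by
          intro l
          have hv : ((⟨n - (m + 1), ht⟩ : Fin n) : ℕ) = n - (m + 1) := rfl
          have : (l : ℕ) < n - m ↔ l ≤ (⟨n - (m + 1), ht⟩ : Fin n) := by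
            rw [Fin.le_def, hv]
            omega
          simp only [Matrix.of_apply]
          by_cases h : (l : ℕ) < n - m
          · rw [if_pos h, if_pos (this.mp h)]
          · rw [if_neg h, if_neg (fun hh => h (this.mpr hh))]
        rw [if_pos rfl, Finset.sum_congr rfl fun l _ => by rw [hcol l], key]
        have : ¬ ((⟨n - (m + 1), ht⟩ : Fin n) : ℕ) < n - (m + 1) := by simp
        rw [Matrix.of_apply, if_neg this]
      · rw [if_neg hj]
        have hjne : (j : ℕ) ≠ n - (m + 1) := fun h => hj (Fin.ext h)
        have : ((j : ℕ) < n - m) ↔ ((j : ℕ) < n - (m + 1)) := by omega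
        simp only [Matrix.of_apply]
        by_cases h : (j : ℕ) < n - m
        · rw [if_pos h, if_pos (this.mp h)]
        · rw [if_neg h, if_neg (fun hh => h (this.mpr hh))]
  have hfinal := main n le_rfl
  rw [Nat.sub_self, List.drop_zero] at hfinal
  have hone : (Matrix.of fun i j : Fin n =>
      if (j : ℕ) < 0 then B i j else if i = j then (1 : ℂ) else 0) = 1 := by
    ext i j
    simp [Matrix.one_apply]
  rw [hone] at hfinal
  exact Matrix.inv_eq_right_inv hfinal
end

section
/- Let C_k be as defined from a lower triangular matrix A, and let L be the n×n lower shift matrix (L_{k+1,k} = 1, all other entries 0). If k > j then C_k C_j = a_{k,j} · C_k L^{k−j}. -/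
/-- `C_k = E_k - I`. -/
def Ck {n : ℕ} (A : Matrix (Fin n) (Fin n) ℂ) (k : Fin n) :
    Matrix (Fin n) (Fin n) ℂ :=
  elemFactor A k - 1

/-- The lower shift matrix `L`, with `L_{k+1,k} = 1`. -/
def shiftL (n : ℕ) : Matrix (Fin n) (Fin n) ℂ :=
  Matrix.of fun i j => if (i : ℕ) = (j : ℕ) + 1 then 1 else 0

lemma Ck_apply {n : ℕ} (A : Matrix (Fin n) (Fin n) ℂ) (k i l : Fin n) :
    Ck A k i l = if l = k then A i k - (if i = k then 1 else 0) else 0 := by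
  simp only [Ck, elemFactor, Matrix.sub_apply, Matrix.one_apply, Matrix.of_apply]
  by_cases h : l = k
  · subst h
    by_cases h2 : i = l <;> simp [h2]
  · by_cases h2 : i = l <;> simp [h, h2]

lemma shiftL_pow_apply {n : ℕ} (p : ℕ) (i m : Fin n) :
    (shiftL n ^ p) i m = if (i : ℕ) = (m : ℕ) + p then 1 else 0 := by
  induction p generalizing i m with
  | zero => simp [Matrix.one_apply, Fin.ext_iff]
  | succ p ih =>
    rw [pow_succ, Matrix.mul_apply]
    simp only [ih]
    simp only [shiftL, Matrix.of_apply]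
    by_cases h : (i : ℕ) = (m : ℕ) + (p + 1)
    · have hm1 : (m : ℕ) + 1 < n := by omega
      rw [Finset.sum_eq_single (⟨(m : ℕ) + 1, hm1⟩ : Fin n)]
      · have h1 : (i : ℕ) = (m : ℕ) + 1 + p := by omega
        have h2 : (m : ℕ) + 1 + p = (m : ℕ) + (p + 1) := by omega
        simp [h1, h2]
      · intro b _ hb
        have : (b : ℕ) ≠ (m : ℕ) + 1 := by
          intro hh; exact hb (Fin.ext hh)
        simp [this]
      · simp
    · rw [if_neg h]
      apply Finset.sum_eq_zero
      intro b _
      by_cases h1 : (i : ℕ) = (b : ℕ) + p <;> by_cases h2 : (b : ℕ) = (m : ℕ) + 1 <;>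
        simp [h1, h2] <;> omega

theorem stmt7 {n : ℕ} (A : Matrix (Fin n) (Fin n) ℂ)
    (hlow : ∀ i j : Fin n, i < j → A i j = 0) (j k : Fin n) (hjk : j < k) :
    Ck A k * Ck A j = A k j • (Ck A k * shiftL n ^ ((k : ℕ) - (j : ℕ))) := by
  ext i m
  rw [Matrix.smul_apply, Matrix.mul_apply, Matrix.mul_apply]
  have hL : ∀ l : Fin n, (shiftL n ^ ((k : ℕ) - (j : ℕ))) l m
      = if (l : ℕ) = (m : ℕ) + ((k : ℕ) - (j : ℕ)) then 1 else 0 :=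
    fun l => shiftL_pow_apply _ l m
  have hcollapse : ∀ (f : Fin n → ℂ),
      (∑ l, Ck A k i l * f l) = Ck A k i k * f k := by
    intro f
    rw [Finset.sum_eq_single k]
    · intro b _ hb; rw [Ck_apply]; simp [hb]
    · simp
  rw [hcollapse, hcollapse, hL]
  have hkj : k ≠ j := ne_of_gt hjk
  have hlt : (j : ℕ) < (k : ℕ) := hjk
  have hkcond : ((k : ℕ) = (m : ℕ) + ((k : ℕ) - (j : ℕ))) ↔ m = j := by
    rw [Fin.ext_iff]; omega
  by_cases hm : m = j
  · subst hm
    rw [if_pos (by omega : (k : ℕ) = (m : ℕ) + ((k : ℕ) - (m : ℕ)))]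
    simp only [Ck_apply, if_pos rfl, if_neg hkj, if_true, smul_eq_mul]
    ring
  · have hc : ¬ ((k : ℕ) = (m : ℕ) + ((k : ℕ) - (j : ℕ))) := by
      rw [hkcond]; exact hm
    rw [if_neg hc]
    simp [Ck_apply, hm]
end

section
/- Let H be an n×n strict lower k-Hessenberg matrix with block decomposition H = [[B, A],[D, C]] where A is the m×m lower triangular block (m = n − k). If G := C A⁻¹ B − D is invertible, then H is invertible and H⁻¹ = [[0,0],[A⁻¹,0]] − [I_k; E] G⁻¹ [F, I_k], where E = −A⁻¹ B and F = −C A⁻¹. -/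
/-!
With `E = -A⁻¹ B` and `F = -C A⁻¹`, the block row `[F, I]` annihilates the `[A; C]` column of
`H = [[B, A], [D, C]]`: `[F, I] H = [-G, 0]`. Hence `[I; E] G⁻¹ [F, I] H = [[-I, 0], [-E, 0]]`,
while `[[0, 0], [A⁻¹, 0]] H = [[0, 0], [-E, I]]`; the difference is the identity. As `H` is
square, this left inverse is also a right inverse.
-/

namespace Matrix

theorem IsLowerTriangular.isUnit {m K : Type*} [Fintype m] [LinearOrder m] [DecidableEq m]
    [Field K] {A : Matrix m m K} (hlow : A.IsLowerTriangular) (hdiag : ∀ i, A i i ≠ 0) :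
    IsUnit A := by
  rw [isUnit_iff_isUnit_det, det_of_isLowerTriangular A hlow]
  exact (Finset.prod_ne_zero_iff.2 fun i _ => hdiag i).isUnit

variable {m k R : Type*} [Fintype m] [Fintype k] [DecidableEq m] [DecidableEq k] [CommRing R]

noncomputable def hessenbergInv (A : Matrix m m R) (B : Matrix m k R) (C : Matrix k m R)
    (D : Matrix k k R) : Matrix (k ⊕ m) (m ⊕ k) R :=
  fromBlocks (0 : Matrix k m R) 0 A⁻¹ 0 -
    fromRows (1 : Matrix k k R) (-(A⁻¹ * B)) * (C * A⁻¹ * B - D)⁻¹ *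
      fromCols (-(C * A⁻¹)) (1 : Matrix k k R)

theorem hessenbergInv_mul_fromBlocks {A : Matrix m m R} (B : Matrix m k R) (C : Matrix k m R)
    (D : Matrix k k R) (hA : IsUnit A) (hG : IsUnit (C * A⁻¹ * B - D)) :
    hessenbergInv A B C D * fromBlocks B A D C = 1 := by
  set G := C * A⁻¹ * B - D with hG_def
  have hAA : A⁻¹ * A = 1 := nonsing_inv_mul A ((isUnit_iff_isUnit_det A).1 hA)
  have hGG : G⁻¹ * G = 1 := nonsing_inv_mul G ((isUnit_iff_isUnit_det G).1 hG)
  have hrow : fromCols (-(C * A⁻¹)) (1 : Matrix k k R) * fromBlocks B A D C =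
      fromCols (-G) (0 : Matrix k m R) := by
    rw [fromCols_mul_fromBlocks, Matrix.neg_mul, Matrix.neg_mul, Matrix.mul_assoc C A⁻¹ A, hAA,
      Matrix.mul_one, Matrix.one_mul, Matrix.one_mul, neg_add_cancel, hG_def, neg_sub,
      sub_eq_neg_add]
  have hcorr :
      fromRows (1 : Matrix k k R) (-(A⁻¹ * B)) * G⁻¹ * fromCols (-G) (0 : Matrix k m R) =
        fromBlocks (-1) 0 (A⁻¹ * B) 0 := by
    rw [Matrix.mul_assoc, mul_fromCols, Matrix.mul_neg, hGG, Matrix.mul_zero,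
      fromRows_mul_fromCols]
    simp
  have hlead : (fromBlocks 0 0 A⁻¹ 0 : Matrix (k ⊕ m) (m ⊕ k) R) * fromBlocks B A D C =
      fromBlocks 0 0 (A⁻¹ * B) 1 := by
    rw [fromBlocks_multiply]
    simp [hAA]
  rw [hessenbergInv, ← hG_def, Matrix.sub_mul, hlead, Matrix.mul_assoc (_ * G⁻¹), hrow, hcorr,
    ← fromBlocks_one, sub_eq_add_neg, fromBlocks_neg, fromBlocks_add]
  simp

theorem fromBlocks_mul_hessenbergInv {A : Matrix m m R} (B : Matrix m k R) (C : Matrix k m R)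
    (D : Matrix k k R) (hA : IsUnit A) (hG : IsUnit (C * A⁻¹ * B - D)) :
    fromBlocks B A D C * hessenbergInv A B C D = 1 :=
  (mul_eq_one_comm_of_equiv (Equiv.sumComm k m)).1 (hessenbergInv_mul_fromBlocks B C D hA hG)

end Matrix

/-- Theorem 3.1 (sufficiency): inverse of a strict lower `k`-Hessenberg matrix
`H = [[B, A], [D, C]]` with `A` the `m × m` lower triangular block. -/
theorem stmt14 {m k : ℕ}
    (A : Matrix (Fin m) (Fin m) ℂ) (B : Matrix (Fin m) (Fin k) ℂ)
    (C : Matrix (Fin k) (Fin m) ℂ) (D : Matrix (Fin k) (Fin k) ℂ)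
    (hAlow : ∀ i j : Fin m, i < j → A i j = 0)
    (hAdiag : ∀ i : Fin m, A i i ≠ 0)
    (hG : IsUnit (C * A⁻¹ * B - D)) :
    Matrix.fromBlocks B A D C *
        (Matrix.fromBlocks (0 : Matrix (Fin k) (Fin m) ℂ) 0 A⁻¹ 0 -
          Matrix.fromRows (1 : Matrix (Fin k) (Fin k) ℂ) (-(A⁻¹ * B)) *
            (C * A⁻¹ * B - D)⁻¹ *
              Matrix.fromCols (-(C * A⁻¹)) (1 : Matrix (Fin k) (Fin k) ℂ)) = 1 ∧
      (Matrix.fromBlocks (0 : Matrix (Fin k) (Fin m) ℂ) 0 A⁻¹ 0 -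
          Matrix.fromRows (1 : Matrix (Fin k) (Fin k) ℂ) (-(A⁻¹ * B)) *
            (C * A⁻¹ * B - D)⁻¹ *
              Matrix.fromCols (-(C * A⁻¹)) (1 : Matrix (Fin k) (Fin k) ℂ)) *
        Matrix.fromBlocks B A D C = 1 := by
  have hA : IsUnit A := Matrix.IsLowerTriangular.isUnit hAlow hAdiag
  exact ⟨Matrix.fromBlocks_mul_hessenbergInv B C D hA hG,
    Matrix.hessenbergInv_mul_fromBlocks B C D hA hG⟩
end

section
/- Let A be an n×n block lower triangular matrix with square diagonal blocks X_1,…,X_r of sizes k_1,…,k_r (∑ k_j = n), and let E_j be the block elementary factor of A by columns (coinciding with A on the columns of block j and with the identity elsewhere). If X_j is invertible then E_j is invertible with E_j⁻¹ = I − (E_j − I)·Diag(I_{m_j}, X_j⁻¹, I_{p_j}), where m_j = k_1 + ⋯ + k_{j−1} and p_j = n − m_j − k_j; and if all X_j are invertible then A⁻¹ = E_r⁻¹ E_{r−1}⁻¹ ⋯ E_1⁻¹. -/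
/-- The block elementary factor (by columns) `E_j` of a block matrix `A`
indexed by `Σ j : Fin r, Fin (k j)`. -/
def blockElem {r : ℕ} {k : Fin r → ℕ}
    (A : Matrix ((j : Fin r) × Fin (k j)) ((j : Fin r) × Fin (k j)) ℂ) (j : Fin r) :
    Matrix ((j : Fin r) × Fin (k j)) ((j : Fin r) × Fin (k j)) ℂ :=
  Matrix.of fun p q => if q.1 = j then A p q else if p = q then 1 else 0

/-- The `j`-th diagonal block `X_j` of `A`. -/
def diagBlock {r : ℕ} {k : Fin r → ℕ}
    (A : Matrix ((j : Fin r) × Fin (k j)) ((j : Fin r) × Fin (k j)) ℂ) (j : Fin r) :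
    Matrix (Fin (k j)) (Fin (k j)) ℂ :=
  Matrix.of fun a b => A ⟨j, a⟩ ⟨j, b⟩

/-- Embedding of a `k j × k j` matrix as the `j`-th diagonal block of a big
block matrix (all other entries zero). -/
def embedBlock {r : ℕ} {k : Fin r → ℕ} (j : Fin r)
    (M : Matrix (Fin (k j)) (Fin (k j)) ℂ) :
    Matrix ((j : Fin r) × Fin (k j)) ((j : Fin r) × Fin (k j)) ℂ :=
  Matrix.of fun p q =>
    if hp : p.1 = j then
      if hq : q.1 = j then M (Fin.cast (congrArg k hp) p.2) (Fin.cast (congrArg k hq) q.2)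
      else 0
    else 0

/-
With `P = embedBlock j 1` the projection onto the coordinates of block `j`, `E_j = 1 - P + A P`.
For `Z = embedBlock j X_j⁻¹` the identities `P P = P`, `P Z = Z` and `P A Z = P` alone give
`(E_j - 1)(1 - P + Z) = A Z - Z` and `E_j (1 - A Z + Z) = 1`. For the factorization,
`(1 - Q + A Q)(1 - P + A P) = 1 - (Q + P) + A (Q + P)` whenever `Q P = 0` and `Q A P = 0`; when `Q`
and `P` project onto earlier and later blocks, the second condition is block lower triangularity.
Hence `E_1 ⋯ E_r = 1 - 1 + A · 1 = A`, and `A⁻¹` is the reversed product of the inverses.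
-/

section ColumnFactor

variable {R : Type*} [Ring R]

/-- The element agreeing with `A` on the range of `P` and with `1` on its complement. -/
def columnFactor (A P : R) : R := 1 - P + A * P

lemma columnFactor_zero (A : R) : columnFactor A 0 = 1 := by
  simp [columnFactor]

lemma columnFactor_one (A : R) : columnFactor A 1 = A := by
  simp [columnFactor]

lemma columnFactor_mul_columnFactor {A P Q : R} (hQP : Q * P = 0) (hQAP : Q * A * P = 0) :
    columnFactor A Q * columnFactor A P = columnFactor A (Q + P) := by
  have hAQAP : A * Q * (A * P) = 0 := by rw [mul_assoc, ← mul_assoc Q, hQAP, mul_zero]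
  have hAQP : A * Q * P = 0 := by rw [mul_assoc, hQP, mul_zero]
  calc columnFactor A Q * columnFactor A P
      = 1 - (Q + P) + A * (Q + P) + Q * P - Q * A * P - A * Q * P + A * Q * (A * P) := by
        simp only [columnFactor]; noncomm_ring
    _ = columnFactor A (Q + P) := by rw [hQP, hQAP, hAQP, hAQAP, columnFactor]; abel

lemma columnFactor_mul_one_sub_mul_eq_one {A P Z : R} (hP : P * P = P) (hPZ : P * Z = Z)
    (hPAZ : P * A * Z = P) :
    columnFactor A P * (1 - (columnFactor A P - 1) * (1 - P + Z)) = 1 := by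
  have hright : (columnFactor A P - 1) * (1 - P + Z) = A * Z - Z :=
    calc (columnFactor A P - 1) * (1 - P + Z) = (A - 1) * (P * (1 - P + Z)) := by
          simp only [columnFactor]; noncomm_ring
      _ = A * Z - Z := by rw [mul_add, mul_sub, mul_one, hP, sub_self, zero_add, hPZ, sub_mul,
          one_mul]
  have hPW : P * (1 - A * Z + Z) = Z := by
    rw [mul_add, mul_sub, mul_one, ← mul_assoc, hPAZ, hPZ, sub_self, zero_add]
  calc columnFactor A P * (1 - (columnFactor A P - 1) * (1 - P + Z))
      = (1 - A * Z + Z) - P * (1 - A * Z + Z) + A * (P * (1 - A * Z + Z)) := by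
        rw [hright, columnFactor]; noncomm_ring
    _ = 1 := by rw [hPW]; abel

end ColumnFactor

section BlockMatrix

open Matrix

variable {r : ℕ} {k : Fin r → ℕ}
  (A : Matrix ((j : Fin r) × Fin (k j)) ((j : Fin r) × Fin (k j)) ℂ)

lemma embedBlock_eq_blockDiagonal' (j : Fin r) (M : Matrix (Fin (k j)) (Fin (k j)) ℂ) :
    embedBlock j M = blockDiagonal' (Pi.single j M) := by
  ext ⟨a, x⟩ ⟨b, y⟩
  by_cases ha : a = j
  · subst ha
    by_cases hb : b = a
    · subst hb; simp [embedBlock, blockDiagonal'_apply]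
    · simp [embedBlock, blockDiagonal'_apply, hb, Ne.symm hb]
  · simp [embedBlock, blockDiagonal'_apply, ha]

lemma embedBlock_mul_embedBlock (j : Fin r) (M N : Matrix (Fin (k j)) (Fin (k j)) ℂ) :
    embedBlock j M * embedBlock j N = embedBlock j (M * N) := by
  simp only [embedBlock_eq_blockDiagonal', ← blockDiagonal'_mul, ← Pi.mul_apply,
    ← Pi.single_mul]

lemma embedBlock_one (j : Fin r) :
    embedBlock j (1 : Matrix (Fin (k j)) (Fin (k j)) ℂ) =
      diagonal fun p => if p.1 = j then 1 else 0 := by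
  ext ⟨a, x⟩ ⟨b, y⟩
  by_cases ha : a = j
  · subst ha
    by_cases hb : b = a
    · subst hb; simp [embedBlock, diagonal_apply, one_apply]
    · simp [embedBlock, hb, Ne.symm hb]
  · simp [embedBlock, diagonal_apply, ha]

lemma blockElem_eq_columnFactor (j : Fin r) :
    blockElem A j = columnFactor A (embedBlock j 1) := by
  ext p q
  by_cases hpq : p = q
  · subst hpq
    by_cases hp : p.1 = j <;> simp [blockElem, columnFactor, embedBlock_one, hp]
  · by_cases hq : q.1 = j <;>
      simp [blockElem, columnFactor, embedBlock_one, hq, hpq, one_apply]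

lemma embedBlock_one_mul_mul_embedBlock_one (j : Fin r) :
    embedBlock j 1 * A * embedBlock j 1 = embedBlock j (diagBlock A j) := by
  ext ⟨a, x⟩ ⟨b, y⟩
  rw [embedBlock_one, mul_diagonal, diagonal_mul]
  by_cases ha : a = j
  · subst ha
    by_cases hb : b = a
    · subst hb; simp [embedBlock, diagBlock]
    · simp [embedBlock, hb]
  · simp [embedBlock, ha]

lemma embedBlock_one_mul_embedBlock_one_of_ne {i j : Fin r} (hij : i ≠ j) :
    embedBlock i (1 : Matrix (Fin (k i)) (Fin (k i)) ℂ) * embedBlock j 1 = 0 := by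
  ext p q
  rw [embedBlock_one, embedBlock_one, diagonal_mul_diagonal]
  by_cases hp : p.1 = i <;> simp [diagonal_apply, hp, hij]

variable {A} in
lemma embedBlock_one_mul_mul_embedBlock_one_of_lt
    (hA : ∀ p q : (j : Fin r) × Fin (k j), p.1 < q.1 → A p q = 0) {i j : Fin r} (hij : i < j) :
    embedBlock i 1 * A * embedBlock j 1 = 0 := by
  ext p q
  rw [embedBlock_one, embedBlock_one, mul_diagonal, diagonal_mul]
  by_cases hp : p.1 = i
  · by_cases hq : q.1 = j
    · simp [hA p q (hp ▸ hq ▸ hij)]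
    · simp [hq]
  · simp [hp]

lemma sum_embedBlock_one :
    ∑ j : Fin r, embedBlock j (1 : Matrix (Fin (k j)) (Fin (k j)) ℂ) = 1 := by
  ext p q
  simp [embedBlock_one, Matrix.sum_apply, diagonal_apply, one_apply, Finset.sum_ite_eq]

lemma blockElem_mul_eq_one (j : Fin r) (hX : IsUnit (diagBlock A j)) :
    blockElem A j * (1 - (blockElem A j - 1) *
      (1 - embedBlock j 1 + embedBlock j (diagBlock A j)⁻¹)) = 1 := by
  have hXinv : diagBlock A j * (diagBlock A j)⁻¹ = 1 :=
    mul_nonsing_inv _ ((isUnit_iff_isUnit_det _).mp hX)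
  rw [blockElem_eq_columnFactor]
  refine columnFactor_mul_one_sub_mul_eq_one ?_ ?_ ?_
  · rw [embedBlock_mul_embedBlock, one_mul]
  · rw [embedBlock_mul_embedBlock, one_mul]
  · conv_lhs => rw [← one_mul (diagBlock A j)⁻¹, ← embedBlock_mul_embedBlock, ← mul_assoc,
      embedBlock_one_mul_mul_embedBlock_one, embedBlock_mul_embedBlock, hXinv]

variable {A} in
lemma list_prod_map_blockElem (hA : ∀ p q : (j : Fin r) × Fin (k j), p.1 < q.1 → A p q = 0)
    (l : List (Fin r)) (hl : l.Pairwise (· < ·)) :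
    (l.map (blockElem A)).prod = columnFactor A (l.map fun j => embedBlock j 1).sum := by
  induction l with
  | nil => rw [List.map_nil, List.prod_nil, List.map_nil, List.sum_nil, columnFactor_zero]
  | cons i l ih =>
    obtain ⟨hi, hl⟩ := List.pairwise_cons.mp hl
    have hdisjoint : embedBlock i (1 : Matrix (Fin (k i)) (Fin (k i)) ℂ) *
        (l.map fun j => embedBlock j 1).sum = 0 := by
      rw [← List.sum_map_mul_left]
      exact List.sum_eq_zero fun _ hm => by
        obtain ⟨j, hj, rfl⟩ := List.mem_map.mp hm
        exact embedBlock_one_mul_embedBlock_one_of_ne (hi j hj).ne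
    have hlower : embedBlock i (1 : Matrix (Fin (k i)) (Fin (k i)) ℂ) * A *
        (l.map fun j => embedBlock j 1).sum = 0 := by
      rw [← List.sum_map_mul_left]
      exact List.sum_eq_zero fun _ hm => by
        obtain ⟨j, hj, rfl⟩ := List.mem_map.mp hm
        exact embedBlock_one_mul_mul_embedBlock_one_of_lt hA (hi j hj)
    rw [List.map_cons, List.prod_cons, ih hl, blockElem_eq_columnFactor,
      columnFactor_mul_columnFactor hdisjoint hlower, List.map_cons, List.sum_cons]

variable {A} in
lemma list_prod_ofFn_blockElem (hA : ∀ p q : (j : Fin r) × Fin (k j), p.1 < q.1 → A p q = 0) :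
    (List.ofFn (blockElem A)).prod = A := by
  rw [List.ofFn_eq_map, list_prod_map_blockElem hA _ (List.pairwise_lt_finRange r),
    ← List.ofFn_eq_map, List.sum_ofFn, sum_embedBlock_one, columnFactor_one]

end BlockMatrix

theorem stmt19 {r : ℕ} {k : Fin r → ℕ}
    (A : Matrix ((j : Fin r) × Fin (k j)) ((j : Fin r) × Fin (k j)) ℂ)
    (hA : ∀ p q : (j : Fin r) × Fin (k j), p.1 < q.1 → A p q = 0) :
    (∀ j : Fin r, IsUnit (diagBlock A j) →
        IsUnit (blockElem A j) ∧
          (blockElem A j)⁻¹ =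
            1 - (blockElem A j - 1) *
              (1 - embedBlock j (1 : Matrix (Fin (k j)) (Fin (k j)) ℂ) +
                embedBlock j (diagBlock A j)⁻¹)) ∧
      ((∀ j : Fin r, IsUnit (diagBlock A j)) →
        A⁻¹ = (List.ofFn fun j => (blockElem A j)⁻¹).reverse.prod) := by
  refine ⟨fun j hX => ?_, fun _ => ?_⟩
  · have hright := blockElem_mul_eq_one A j hX
    exact ⟨IsUnit.of_mul_eq_one _ hright, Matrix.inv_eq_right_inv hright⟩
  · conv_lhs => rw [← list_prod_ofFn_blockElem hA]
    rw [Matrix.list_prod_inv_reverse, List.map_reverse, List.map_ofFn]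
    rfl
end
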